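/- Let p ≥ 1, n = 2p + 1, and let S_p be an independent dominating set of Q_p. For each A ∈ {0,1}^p and each s ∈ S_p, define the vertex of Q_n given by the concatenation c · A · (s ⊕ A), where s ⊕ A is the bitwise XOR of s and A, and the leading bit c equals the parity (mod-2 sum of bits) of A. Then the resulting set S_n of 2^p · |S_p| vertices is an independent set of Q_n. -/

import Mathlib

/-- The n-dimensional hypercube graph on binary n-tuples, adjacency = Hamming distance 1. -/
def Q (n : ℕ) : SimpleGraph (Fin n → Bool) where
  Adj u v := hammingDist u v = 1
  symm := ⟨fun u v (h : hammingDist u v = 1) => show hammingDist v u = 1 by rw [hammingDist_comm]; exact h⟩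
  loopless := ⟨fun u (h : hammingDist u u = 1) => by simp at h⟩

instance (n : ℕ) : DecidableRel (Q n).Adj := fun u v =>
  inferInstanceAs (Decidable (hammingDist u v = 1))

/-- S is an independent set of Q n. -/
def IsIndep {n : ℕ} (S : Set (Fin n → Bool)) : Prop :=
  ∀ u ∈ S, ∀ v ∈ S, ¬ (Q n).Adj u v

/-- S is a dominating set of Q n. -/
def IsDom {n : ℕ} (S : Set (Fin n → Bool)) : Prop :=
  ∀ v, v ∉ S → ∃ u ∈ S, (Q n).Adj u v

/-- The independent domination number of Q n. -/
noncomputable def alpha (n : ℕ) : ℕ :=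
  sInf {m | ∃ S : Finset (Fin n → Bool),
    IsIndep (S : Set (Fin n → Bool)) ∧ IsDom (S : Set (Fin n → Bool)) ∧ S.card = m}

/-- The parity (mod-2 sum of bits) of a binary p-tuple. -/
def parity {p : ℕ} (A : Fin p → Bool) : Bool :=
  decide (Odd (Finset.univ.filter (fun i => A i = true)).card)

/-- The vertex parity(A) · A · (s ⊕ A) of Q_{2p+1} (written as Q_{1+(p+p)}). -/
def doubleVec {p : ℕ} (A s : Fin p → Bool) : Fin (1 + (p + p)) → Bool :=
  Fin.append (fun _ : Fin 1 => parity A) (Fin.append A (fun i => xor (s i) (A i)))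

/-- The set { parity(A) · A · (s ⊕ A) : A ∈ {0,1}^p, s ∈ S }. -/
def doubleSet {p : ℕ} (S : Finset (Fin p → Bool)) :
    Finset (Fin (1 + (p + p)) → Bool) :=
  (Finset.univ ×ˢ S).image (fun x => doubleVec x.1 x.2)

lemma ham_append {m n : ℕ} (a c : Fin m → Bool) (b d : Fin n → Bool) :
    hammingDist (Fin.append a b) (Fin.append c d) = hammingDist a c + hammingDist b d := by
  simp only [hammingDist, Finset.card_filter]
  rw [Fin.sum_univ_add]
  simp [Fin.append_left, Fin.append_right]

lemma ham_xor {p : ℕ} (s t A : Fin p → Bool) :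
    hammingDist (fun i => xor (s i) (A i)) (fun i => xor (t i) (A i)) = hammingDist s t := by
  simp only [hammingDist]
  congr 1
  apply Finset.filter_congr
  intro i _
  cases s i <;> cases t i <;> cases A i <;> simp

lemma parity_eq_iff {p : ℕ} (A B : Fin p → Bool) :
    (parity A = parity B) ↔ Even (hammingDist A B) := by
  have key : hammingDist A B + ∑ i, (if A i = true ∧ B i = true then 2 else 0) =
      (Finset.univ.filter (fun i => A i = true)).card +
      (Finset.univ.filter (fun i => B i = true)).card := by
    simp only [hammingDist, Finset.card_filter, ← Finset.sum_add_distrib]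
    apply Finset.sum_congr rfl
    intro i _
    cases hA : A i <;> cases hB : B i <;> simp [hA, hB]
  have hev : Even (∑ i, (if A i = true ∧ B i = true then 2 else 0)) := by
    apply Finset.even_sum
    intro i _
    split <;> simp
  have h2 : Even (hammingDist A B) ↔
      Even ((Finset.univ.filter (fun i => A i = true)).card +
        (Finset.univ.filter (fun i => B i = true)).card) := by
    rw [← key, Nat.even_add]
    simp [hev]
  unfold parity
  rw [decide_eq_decide, h2, Nat.even_add, ← Nat.not_even_iff_odd, ← Nat.not_even_iff_odd]
  tauto

lemma doubleVec_injective {p : ℕ} :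
    Function.Injective (fun x : (Fin p → Bool) × (Fin p → Bool) => doubleVec x.1 x.2) := by
  rintro ⟨A, s⟩ ⟨B, t⟩ h
  simp only at h
  have hA : A = B := by
    funext i
    have := congrFun h (Fin.natAdd 1 (Fin.castAdd p i))
    simpa [doubleVec, Fin.append_right, Fin.append_left] using this
  subst hA
  have hs : s = t := by
    funext i
    have := congrFun h (Fin.natAdd 1 (Fin.natAdd p i))
    rw [doubleVec, doubleVec, Fin.append_right, Fin.append_right,
      Fin.append_right, Fin.append_right] at this
    cases hAi : A i <;> cases hsi : s i <;> cases hti : t i <;>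
      simp_all
  simp [hs]

/-- For p ≥ 1 and S_p an independent dominating set of Q_p, the set
    { parity(A) · A · (s ⊕ A) } of 2^p·|S_p| vertices is an independent set
    of Q_{2p+1}. -/
theorem doubleSet_indep {p : ℕ} (hp : 1 ≤ p) (S : Finset (Fin p → Bool))
    (hi : IsIndep (S : Set (Fin p → Bool))) (hd : IsDom (S : Set (Fin p → Bool))) :
    IsIndep ((doubleSet S : Finset (Fin (1 + (p + p)) → Bool)) :
      Set (Fin (1 + (p + p)) → Bool)) ∧
    (doubleSet S).card = 2 ^ p * S.card := by
  constructor
  · intro u hu v hv hadj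
    simp only [doubleSet, Finset.coe_image, Set.mem_image, Finset.mem_coe,
      Finset.mem_product] at hu hv
    obtain ⟨⟨A, s⟩, ⟨-, hs⟩, rfl⟩ := hu
    obtain ⟨⟨B, t⟩, ⟨-, ht⟩, rfl⟩ := hv
    have h1 : hammingDist (doubleVec A s) (doubleVec B t) = 1 := hadj
    rw [doubleVec, doubleVec, ham_append, ham_append] at h1
    set d0 := hammingDist (fun _ : Fin 1 => parity A) (fun _ : Fin 1 => parity B) with hd0
    set d1 := hammingDist A B with hd1
    set d2 := hammingDist (fun i => xor (s i) (A i)) (fun i => xor (t i) (B i)) with hd2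
    rcases Nat.eq_zero_or_pos d1 with h10 | h1pos
    · -- A = B
      have hAB : A = B := hammingDist_eq_zero.mp (by rw [← hd1]; exact h10)
      subst hAB
      have hd0z : d0 = 0 := by
        rw [hd0, hammingDist_eq_zero]
      have hd2v : d2 = 1 := by omega
      have : hammingDist s t = 1 := by
        rw [← ham_xor s t A]; exact hd2v
      exact hi s hs t ht this
    · -- d1 ≥ 1, so d1 = 1, d0 = 0, but d1 odd forces parity A ≠ parity B, i.e. d0 ≥ 1
      have hd1v : d1 = 1 := by omega
      have hd0z : d0 = 0 := by omega
      have hpar : parity A = parity B := by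
        have : (fun _ : Fin 1 => parity A) = (fun _ : Fin 1 => parity B) :=
          hammingDist_eq_zero.mp hd0z
        exact congrFun this 0
      have : Even d1 := by rw [hd1]; exact (parity_eq_iff A B).mp hpar
      rw [hd1v] at this
      exact Nat.not_even_one this
  · rw [doubleSet, Finset.card_image_of_injective _ doubleVec_injective,
      Finset.card_product, Finset.card_univ]
    simp
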